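/- Let U be an irreducible W-module and let x be an element of A (or of H) lying in a W-submodule isomorphic to U which it generates. Fix representatives s_ℓ ∈ T_ℓ and s_p ∈ T_p of the conjugacy classes of reflections. Then δ(D_c(x)) = ( c(s_ℓ)·|T_ℓ|·(1 − χ_U(s_ℓ)/χ_U(1)) + c(s_p)·|T_p|·(1 − χ_U(s_p)/χ_U(1)) )·x, where χ_U is the character of U. -/

import Mathlib

open scoped TensorProduct
noncomputable section

abbrev Vc (r : ℕ) := Fin r → ℂ
abbrev Pc (r : ℕ) := MvPolynomial (Fin r) ℂ
abbrev Ec (r : ℕ) := ExteriorAlgebra ℂ (Vc r)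
abbrev Wc (r : ℕ) := Ec r ⊗[ℂ] Pc r

variable {r : ℕ}

/-- The standard symmetric bilinear form on `ℂ^r`. -/
def bil (x y : Vc r) : ℂ := ∑ i, x i * y i

/-- A vector of `ℂ^r` viewed as a degree-one polynomial. -/
def linP (v : Vc r) : Pc r := ∑ i, MvPolynomial.C (v i) * MvPolynomial.X i

/-- The action of a linear automorphism of `V` on polynomials (i.e. on `S(V)`). -/
def pAct (g : Vc r ≃ₗ[ℂ] Vc r) : Pc r →ₐ[ℂ] Pc r :=
  MvPolynomial.aeval fun i => linP (g (Pi.single i 1))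

/-- The action of a linear automorphism of `V` on the exterior algebra of `V`. -/
def eAct (g : Vc r ≃ₗ[ℂ] Vc r) : Ec r →ₐ[ℂ] Ec r :=
  ExteriorAlgebra.map (g : Vc r →ₗ[ℂ] Vc r)

/-- The diagonal action of a linear automorphism of `V` on the Weil algebra `⋀V ⊗ S(V)`. -/
def wAct (g : Vc r ≃ₗ[ℂ] Vc r) : Wc r →ₐ[ℂ] Wc r :=
  Algebra.TensorProduct.map (eAct g) (pAct g)

/-- A vector of `V` viewed inside the exterior algebra. -/
def exti (v : Vc r) : Ec r := ExteriorAlgebra.ι ℂ v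

/-- The de Rham differential on the Weil algebra: `d(q ⊗ k) = ∑ᵢ (xᵢ ∧ q) ⊗ ∂k/∂xᵢ`. -/
def deRham : Wc r →ₗ[ℂ] Wc r :=
  ∑ i, TensorProduct.map (LinearMap.mulLeft ℂ (exti (Pi.single i 1))) ((MvPolynomial.pderiv i).toLinearMap)

/-- The directional derivative `∂_v`. -/
def dirDeriv (v : Vc r) : Pc r →ₗ[ℂ] Pc r := ∑ i, v i • (MvPolynomial.pderiv i).toLinearMap

/-- `g` is a reflection with root `a`, with respect to the standard bilinear form. -/
def IsReflRoot (g : Vc r ≃ₗ[ℂ] Vc r) (a : Vc r) : Prop :=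
  a ≠ 0 ∧ g a = -a ∧ ∀ v, bil a v = 0 → g v = v

/-- The relation whose associated two-sided ideal is `𝒲J`, the ideal generated by the `ψᵢ`. -/
def relJ (ψ : Fin r → Pc r) : Wc r → Wc r → Prop :=
  fun x y => (∃ i, x = (1 : Ec r) ⊗ₜ[ℂ] ψ i) ∧ y = 0

/-- `B = ⋀V ⊗ H = 𝒲/𝒲J`. -/
abbrev Bc (ψ : Fin r → Pc r) := RingQuot (relJ ψ)

/-- The quotient map `π : 𝒲 → B`. -/
def πB (ψ : Fin r → Pc r) : Wc r →ₐ[ℂ] Bc ψ := RingQuot.mkAlgHom ℂ (relJ ψ)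

/-- The Solomon elements `pᵢ = π(d(1 ⊗ ψᵢ))`. -/
def pSol (ψ : Fin r → Pc r) (i : Fin r) : Bc ψ := πB ψ (deRham ((1 : Ec r) ⊗ₜ[ℂ] ψ i))

/-- The covariants `fᵢ(v) = π(1 ⊗ ∂_v ψᵢ)`. -/
def fcov (ψ : Fin r → Pc r) (i : Fin r) (v : Vc r) : Bc ψ :=
  πB ψ ((1 : Ec r) ⊗ₜ[ℂ] dirDeriv v (ψ i))

/-- The `B`-valued pairing `E(φ, χ) = ∑ᵢ φ(xᵢ)·χ(xᵢ)` on maps `V → B`. -/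
def Eform (ψ : Fin r → Pc r) (φ χ : Vc r → Bc ψ) : Bc ψ :=
  ∑ i, φ (Pi.single i 1) * χ (Pi.single i 1)


/-- The covariants `uᵢ = (r/(2|T|))·D∘fᵢ`, where `D` (given here as the operator `DB` on `B`
induced by `D = ∑_{s ∈ T} ∇ₛ`) is the Dunkl differential with `c = 1`. -/
def ucov (ψ : Fin r → Pc r) (T : Finset (Vc r ≃ₗ[ℂ] Vc r)) (DB : Bc ψ →ₗ[ℂ] Bc ψ)
    (i : Fin r) (v : Vc r) : Bc ψ :=
  ((r : ℂ) / (2 * T.card)) • DB (fcov ψ i v)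

/-!
For a reflection `s` with root `α`, the polynomial `α` divides `x - s x`, so `∇ₛ(1 ⊗ x) = α ⊗ q`
with `α q = x - s x`, and the Koszul differential gives back `δ ∇ₛ(1 ⊗ x) = 1 ⊗ (x - s x)`.
Hence `δ D_c x = ∑ₛ c(s) (x - s x)`, and since `x` lies in a copy of `U` this sum can be computed
in `U`. There the sum of `σ(s)` over a conjugacy class `C` commutes with `W`, so by Schur's lemma
it is a scalar, namely `|C| χ_U(s₀) / χ_U(1)`, as comparing traces shows.
-/

section Schur

variable {G : Type*} [Group G] {W : Subgroup G} {K U : Type*} [Field K]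
  [AddCommGroup U] [Module K U] {σ : G → U ≃ₗ[K] U}

theorem exists_eq_smul_id_of_commute [IsAlgClosed K] [FiniteDimensional K U] [Nontrivial U]
    (hUirr : ∀ p : Submodule K U, (∀ g ∈ W, ∀ u ∈ p, σ g u ∈ p) → p = ⊥ ∨ p = ⊤)
    (P : Module.End K U) (hP : ∀ g ∈ W, ∀ u, σ g (P u) = P (σ g u)) :
    ∃ μ : K, P = μ • LinearMap.id := by
  obtain ⟨μ, hμ⟩ := Module.End.exists_eigenvalue P
  have hinv : ∀ g ∈ W, ∀ u ∈ P.eigenspace μ, σ g u ∈ P.eigenspace μ := by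
    intro g hg u hu
    rw [Module.End.mem_eigenspace_iff] at hu ⊢
    rw [← hP g hg, hu, map_smul]
  refine ⟨μ, LinearMap.ext fun u => Module.End.mem_eigenspace_iff.mp ?_⟩
  rw [(hUirr _ hinv).resolve_left hμ]
  exact Submodule.mem_top

variable (hσ : ∀ g ∈ W, ∀ g' ∈ W, σ (g * g') = σ g * σ g')
include hσ

theorem map_conj_mul {g s : G} (hg : g ∈ W) (hs : s ∈ W) :
    σ (g * s * g⁻¹) * σ g = σ g * σ s := by
  rw [← hσ _ (mul_mem (mul_mem hg hs) (inv_mem hg)) _ hg, inv_mul_cancel_right, hσ _ hg _ hs]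

theorem trace_map_conj {g s : G} (hg : g ∈ W) (hs : s ∈ W) :
    LinearMap.trace K U (σ (g * s * g⁻¹) : U →ₗ[K] U)
      = LinearMap.trace K U (σ s : U →ₗ[K] U) := by
  rw [eq_mul_inv_of_mul_eq (map_conj_mul hσ hg hs),
    ← LinearMap.trace_conj' (σ s : U →ₗ[K] U) (σ g)]
  rfl

theorem sum_conjClass_apply [IsAlgClosed K] [CharZero K] [FiniteDimensional K U] [Nontrivial U]
    (hUirr : ∀ p : Submodule K U, (∀ g ∈ W, ∀ u ∈ p, σ g u ∈ p) → p = ⊥ ∨ p = ⊤)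
    {C : Finset G} (hCW : ∀ s ∈ C, s ∈ W) (hconj : ∀ s ∈ C, ∀ w ∈ W, w * s * w⁻¹ ∈ C)
    (hclass : ∀ s ∈ C, ∀ s' ∈ C, ∃ w ∈ W, w * s * w⁻¹ = s') {s₀ : G} (hs₀ : s₀ ∈ C) (u : U) :
    ∑ s ∈ C, σ s u
      = (C.card * LinearMap.trace K U (σ s₀ : U →ₗ[K] U) / Module.finrank K U) • u := by
  set P : Module.End K U := ∑ s ∈ C, (σ s : Module.End K U) with hP
  have hPcomm : ∀ g ∈ W, ∀ u, σ g (P u) = P (σ g u) := by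
    intro g hg u
    simp only [hP, LinearMap.sum_apply, map_sum, LinearEquiv.coe_coe]
    refine Finset.sum_bij' (fun s _ => g * s * g⁻¹) (fun s _ => g⁻¹ * s * g)
      (fun s hs => hconj s hs g hg) (fun s hs => by simpa using hconj s hs g⁻¹ (inv_mem hg))
      (fun s _ => by group) (fun s _ => by group) (fun s hs => ?_)
    rw [← LinearEquiv.mul_apply, ← map_conj_mul hσ hg (hCW s hs), LinearEquiv.mul_apply]
  obtain ⟨μ, hμ⟩ := exists_eq_smul_id_of_commute hUirr P hPcomm
  have htrace : LinearMap.trace K U P = C.card * LinearMap.trace K U (σ s₀ : U →ₗ[K] U) := by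
    rw [hP, map_sum, Finset.sum_congr rfl fun s hs => ?_, Finset.sum_const, nsmul_eq_mul]
    obtain ⟨w, hw, rfl⟩ := hclass s₀ hs₀ s hs
    exact trace_map_conj hσ hw (hCW s₀ hs₀)
  have hdim : (Module.finrank K U : K) ≠ 0 := Nat.cast_ne_zero.mpr Module.finrank_pos.ne'
  rw [hμ, map_smul, LinearMap.trace_id, smul_eq_mul] at htrace
  have hPu : ∑ s ∈ C, σ s u = P u := by simp [hP]
  rw [hPu, hμ, ← htrace, mul_div_cancel_right₀ _ hdim]
  rfl

theorem sum_smul_sub_conjClass [IsAlgClosed K] [CharZero K] [FiniteDimensional K U] [Nontrivial U]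
    (hUirr : ∀ p : Submodule K U, (∀ g ∈ W, ∀ u ∈ p, σ g u ∈ p) → p = ⊥ ∨ p = ⊤)
    {C : Finset G} (hCW : ∀ s ∈ C, s ∈ W) (hconj : ∀ s ∈ C, ∀ w ∈ W, w * s * w⁻¹ ∈ C)
    (hclass : ∀ s ∈ C, ∀ s' ∈ C, ∃ w ∈ W, w * s * w⁻¹ = s') {s₀ : G} (hs₀ : s₀ ∈ C)
    {c : G → K} (hc : ∀ s ∈ C, ∀ w ∈ W, c (w * s * w⁻¹) = c s) (u : U) :
    ∑ s ∈ C, c s • (u - σ s u)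
      = (c s₀ * C.card * (1 - LinearMap.trace K U (σ s₀ : U →ₗ[K] U) / Module.finrank K U))
        • u := by
  have hconst : ∀ s ∈ C, c s = c s₀ := fun s hs => by
    obtain ⟨w, hw, rfl⟩ := hclass s₀ hs₀ s hs
    exact hc s₀ hs₀ w hw
  rw [Finset.sum_congr rfl fun s hs => by rw [hconst s hs], ← Finset.smul_sum,
    Finset.sum_sub_distrib, Finset.sum_const, sum_conjClass_apply hσ hUirr hCW hconj hclass hs₀,
    ← Nat.cast_smul_eq_nsmul K, ← sub_smul, smul_smul]
  congr 1
  ring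

theorem sum_smul_sub_of_two_conjClasses [IsAlgClosed K] [CharZero K] [FiniteDimensional K U]
    [Nontrivial U] (hUirr : ∀ p : Submodule K U, (∀ g ∈ W, ∀ u ∈ p, σ g u ∈ p) → p = ⊥ ∨ p = ⊤)
    {T Tl Tp : Finset G} (hTW : ∀ s ∈ T, s ∈ W)
    (hTsplit : ∀ s, s ∈ T ↔ s ∈ Tl ∨ s ∈ Tp) (hTdisj : Disjoint Tl Tp)
    (hTlconj : ∀ s ∈ Tl, ∀ w ∈ W, w * s * w⁻¹ ∈ Tl)
    (hTpconj : ∀ s ∈ Tp, ∀ w ∈ W, w * s * w⁻¹ ∈ Tp)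
    (hTlclass : ∀ s ∈ Tl, ∀ s' ∈ Tl, ∃ w ∈ W, w * s * w⁻¹ = s')
    (hTpclass : ∀ s ∈ Tp, ∀ s' ∈ Tp, ∃ w ∈ W, w * s * w⁻¹ = s')
    {c : G → K} (hc : ∀ s ∈ T, ∀ w ∈ W, c (w * s * w⁻¹) = c s)
    {sl sp : G} (hsl : sl ∈ Tl) (hsp : sp ∈ Tp) (u : U) :
    ∑ s ∈ T, c s • (u - σ s u)
      = (c sl * Tl.card * (1 - LinearMap.trace K U (σ sl : U →ₗ[K] U) / Module.finrank K U)
          + c sp * Tp.card * (1 - LinearMap.trace K U (σ sp : U →ₗ[K] U) / Module.finrank K U))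
        • u := by
  classical
  have hTl : ∀ s ∈ Tl, s ∈ T := fun s hs => (hTsplit s).2 (.inl hs)
  have hTp : ∀ s ∈ Tp, s ∈ T := fun s hs => (hTsplit s).2 (.inr hs)
  rw [show T = Tl ∪ Tp from Finset.ext fun s => by simpa using hTsplit s,
    Finset.sum_union hTdisj, add_smul,
    sum_smul_sub_conjClass hσ hUirr (fun s hs => hTW s (hTl s hs)) hTlconj hTlclass hsl
      (fun s hs => hc s (hTl s hs)),
    sum_smul_sub_conjClass hσ hUirr (fun s hs => hTW s (hTp s hs)) hTpconj hTpclass hsp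
      (fun s hs => hc s (hTp s hs))]

end Schur

theorem sum_smul_sub_map_of_intertwines {G K U M : Type*} [CommRing K] [AddCommGroup U]
    [Module K U] [AddCommGroup M] [Module K M] {σ : G → U ≃ₗ[K] U} {T : Finset G} {c : G → K}
    {Λ : K} (hU : ∀ u, ∑ s ∈ T, c s • (u - σ s u) = Λ • u) (j : U →ₗ[K] M) {act : G → M → M}
    (hj : ∀ s ∈ T, ∀ u, j (σ s u) = act s (j u)) (u : U) :
    ∑ s ∈ T, c s • (j u - act s (j u)) = Λ • j u := by
  rw [← map_smul, ← hU, map_sum]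
  exact Finset.sum_congr rfl fun s hs => by rw [map_smul, map_sub, hj s hs]

theorem linP_single (i : Fin r) : linP (Pi.single i 1 : Vc r) = MvPolynomial.X i := by
  simp [linP, Pi.single_apply]

theorem linP_sub_smul (v w : Vc r) (t : ℂ) :
    linP (v - t • w) = linP v - MvPolynomial.C t * linP w := by
  simp only [linP, Finset.mul_sum, ← Finset.sum_sub_distrib, Pi.sub_apply, Pi.smul_apply,
    smul_eq_mul, map_sub, map_mul]
  congr! 1 with i
  ring

theorem bil_sub_smul (a v w : Vc r) (t : ℂ) : bil a (v - t • w) = bil a v - t * bil a w := by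
  simp only [bil, Finset.mul_sum, ← Finset.sum_sub_distrib, Pi.sub_apply, Pi.smul_apply,
    smul_eq_mul]
  congr! 1 with i
  ring

theorem linP_ne_zero {a : Vc r} (ha : a ≠ 0) : linP a ≠ 0 := by
  obtain ⟨i, hi⟩ := Function.ne_iff.mp ha
  intro h
  apply hi
  simpa [linP, MvPolynomial.eval_sum, Pi.single_apply] using
    congrArg (MvPolynomial.eval (Pi.single i 1 : Fin r → ℂ)) h

namespace IsReflRoot

variable {s : Vc r ≃ₗ[ℂ] Vc r} {a : Vc r}

theorem bil_self_ne_zero (h : IsReflRoot s a) : bil a a ≠ 0 := by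
  obtain ⟨ha, hsa, hfix⟩ := h
  intro h0
  have h2 : (2 : ℂ) • a = 0 := by
    rw [two_smul]
    nth_rewrite 1 [← hfix a h0, hsa]
    abel
  exact ha ((smul_eq_zero.mp h2).resolve_left two_ne_zero)

theorem apply_eq (h : IsReflRoot s a) (v : Vc r) :
    s v = v - (2 * bil a v / bil a a) • a := by
  set t := bil a v / bil a a
  have hperp : bil a (v - t • a) = 0 := by
    rw [bil_sub_smul, div_mul_cancel₀ _ h.bil_self_ne_zero, sub_self]
  calc s v = s (v - t • a) + t • s a := by rw [← map_smul, ← map_add, sub_add_cancel]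
    _ = v - (2 * t) • a := by rw [h.2.2 _ hperp, h.2.1, mul_smul, two_smul, smul_neg]; abel
    _ = v - (2 * bil a v / bil a a) • a := by rw [mul_div_assoc]

/-- `s` acts trivially on `A / (α)`, since `s xᵢ ≡ xᵢ` modulo `α`. -/
theorem linP_dvd_sub_pAct (h : IsReflRoot s a) (x : Pc r) : linP a ∣ x - pAct s x := by
  set I := Ideal.span {linP a}
  have hmk : (Ideal.Quotient.mkₐ ℂ I).comp (pAct s) = Ideal.Quotient.mkₐ ℂ I := by
    refine MvPolynomial.algHom_ext fun i => ?_
    have hX : pAct s (MvPolynomial.X i) = linP (s (Pi.single i 1)) := by simp [pAct]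
    rw [AlgHom.comp_apply, hX, h.apply_eq, linP_sub_smul, linP_single, Ideal.Quotient.mkₐ_eq_mk,
      map_sub, map_mul, Ideal.Quotient.eq_zero_iff_mem.mpr (Ideal.mem_span_singleton_self _),
      mul_zero, sub_zero]
  rw [← Ideal.mem_span_singleton, ← Ideal.Quotient.eq_zero_iff_mem, map_sub, sub_eq_zero]
  exact (congrArg (· x) hmk).symm

end IsReflRoot

theorem one_tmul_mul_injective {K E P : Type*} [CommRing K] [Ring E] [Algebra K E] [CommRing P]
    [IsDomain P] [Algebra K P] [Module.Flat K E] {p : P} (hp : p ≠ 0) :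
    Function.Injective (((1 : E) ⊗ₜ[K] p) * · : E ⊗[K] P → E ⊗[K] P) := by
  have hmul : (((1 : E) ⊗ₜ[K] p) * · : E ⊗[K] P → E ⊗[K] P)
      = LinearMap.lTensor E (LinearMap.mulLeft K p) := by
    ext z
    induction z using TensorProduct.induction_on with
    | zero => simp
    | tmul e q => simp [Algebra.TensorProduct.tmul_mul_tmul]
    | add x y hx hy => simp only [mul_add, map_add] at hx hy ⊢; rw [hx, hy]
  rw [hmul]
  exact Module.Flat.lTensor_preserves_injective_linearMap _ (mul_right_injective₀ hp)

theorem wAct_one_tmul (g : Vc r ≃ₗ[ℂ] Vc r) (k : Pc r) :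
    wAct g ((1 : Ec r) ⊗ₜ[ℂ] k) = (1 : Ec r) ⊗ₜ[ℂ] pAct g k := by
  simp [wAct]

section Koszul

variable {δW : Wc r →ₗ[ℂ] Wc r}
  (hδ0 : ∀ k : Pc r, δW ((1 : Ec r) ⊗ₜ[ℂ] k) = 0)
  (hδ1 : ∀ (v : Vc r) (ω : Wc r),
    δW ((exti v ⊗ₜ[ℂ] (1 : Pc r)) * ω)
      = ((1 : Ec r) ⊗ₜ[ℂ] linP v) * ω - (exti v ⊗ₜ[ℂ] (1 : Pc r)) * δW ω)
include hδ0 hδ1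

theorem koszul_tmul (v : Vc r) (k : Pc r) :
    δW (exti v ⊗ₜ[ℂ] k) = (1 : Ec r) ⊗ₜ[ℂ] (linP v * k) := by
  have hsplit : exti v ⊗ₜ[ℂ] k = (exti v ⊗ₜ[ℂ] (1 : Pc r)) * ((1 : Ec r) ⊗ₜ[ℂ] k) := by
    simp [Algebra.TensorProduct.tmul_mul_tmul]
  rw [hsplit, hδ1, hδ0, mul_zero, sub_zero, Algebra.TensorProduct.tmul_mul_tmul, one_mul]

theorem koszul_nabla_one_tmul {s : Vc r ≃ₗ[ℂ] Vc r} {a : Vc r} (hsa : IsReflRoot s a)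
    {nab : Wc r →ₗ[ℂ] Wc r}
    (hnab : ∀ ω, ((1 : Ec r) ⊗ₜ[ℂ] linP a) * nab ω
      = ((exti a) ⊗ₜ[ℂ] (1 : Pc r)) * (ω - wAct s ω)) (x : Pc r) :
    δW (nab ((1 : Ec r) ⊗ₜ[ℂ] x)) = (1 : Ec r) ⊗ₜ[ℂ] (x - pAct s x) := by
  obtain ⟨q, hq⟩ := hsa.linP_dvd_sub_pAct x
  have hnabx : nab ((1 : Ec r) ⊗ₜ[ℂ] x) = exti a ⊗ₜ[ℂ] q := by
    refine one_tmul_mul_injective (linP_ne_zero hsa.1) ?_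
    beta_reduce
    rw [hnab, wAct_one_tmul, ← TensorProduct.tmul_sub, hq]
    simp [Algebra.TensorProduct.tmul_mul_tmul]
  rw [hnabx, koszul_tmul hδ0 hδ1, hq]

theorem koszul_dunkl_one_tmul {T : Finset (Vc r ≃ₗ[ℂ] Vc r)} {α : (Vc r ≃ₗ[ℂ] Vc r) → Vc r}
    (hα : ∀ s ∈ T, IsReflRoot s (α s)) {nab : (Vc r ≃ₗ[ℂ] Vc r) → Wc r →ₗ[ℂ] Wc r}
    (hnab : ∀ s ∈ T, ∀ ω, ((1 : Ec r) ⊗ₜ[ℂ] linP (α s)) * nab s ω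
        = ((exti (α s)) ⊗ₜ[ℂ] (1 : Pc r)) * (ω - wAct s ω))
    (c : (Vc r ≃ₗ[ℂ] Vc r) → ℂ) (x : Pc r) :
    δW (∑ s ∈ T, c s • nab s ((1 : Ec r) ⊗ₜ[ℂ] x))
      = (1 : Ec r) ⊗ₜ[ℂ] ∑ s ∈ T, c s • (x - pAct s x) := by
  simp only [map_sum, map_smul, TensorProduct.tmul_sum, TensorProduct.tmul_smul]
  exact Finset.sum_congr rfl fun s hs => by
    rw [koszul_nabla_one_tmul hδ0 hδ1 (hα s hs) (hnab s hs)]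

end Koszul

theorem πB_one_tmul_sum_smul_sub {ψ : Fin r → Pc r}
    {Bact : (Vc r ≃ₗ[ℂ] Vc r) → Bc ψ →ₐ[ℂ] Bc ψ}
    (hBact : ∀ g : Vc r ≃ₗ[ℂ] Vc r, ∀ ω : Wc r, Bact g (πB ψ ω) = πB ψ (wAct g ω))
    (T : Finset (Vc r ≃ₗ[ℂ] Vc r)) (c : (Vc r ≃ₗ[ℂ] Vc r) → ℂ) (k : Pc r) :
    πB ψ ((1 : Ec r) ⊗ₜ[ℂ] ∑ s ∈ T, c s • (k - pAct s k))
      = ∑ s ∈ T, c s • (πB ψ ((1 : Ec r) ⊗ₜ[ℂ] k) - Bact s (πB ψ ((1 : Ec r) ⊗ₜ[ℂ] k))) := by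
  simp only [TensorProduct.tmul_sum, TensorProduct.tmul_smul, TensorProduct.tmul_sub, map_sum,
    map_smul, map_sub, hBact, wAct_one_tmul]

theorem statement7_general
    -- `W` is a finite irreducible reflection group on `V = ℂ^r` (complexified euclidean space),
    (W : Subgroup (Vc r ≃ₗ[ℂ] Vc r))
    -- `T` is the set of reflections of `W`, generating `W`, with roots `α s`,
    (T : Finset (Vc r ≃ₗ[ℂ] Vc r))
    (hT : ∀ g, g ∈ T ↔ g ∈ W ∧ ∃ a, IsReflRoot g a)
    (α : (Vc r ≃ₗ[ℂ] Vc r) → Vc r)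
    (hα : ∀ s ∈ T, IsReflRoot s (α s))
    -- `ψ₁, …, ψᵣ` are homogeneous generators of `A^W` of degrees `2 ≤ d₁ ≤ … ≤ d_r`,
    (ψ : Fin r → Pc r)
    -- `nab s` is the operator `∇ₛ = (αₛ ⊗ 1)·(1−s)/αₛ` on the Weil algebra, characterized by
    -- `(1 ⊗ αₛ) · ∇ₛ(ω) = (αₛ ⊗ 1) · (ω − s·ω)` (multiplication by `1 ⊗ αₛ` is injective),
    (nab : (Vc r ≃ₗ[ℂ] Vc r) → Wc r →ₗ[ℂ] Wc r)
    (hnab : ∀ s ∈ T, ∀ ω, ((1 : Ec r) ⊗ₜ[ℂ] linP (α s)) * nab s ω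
        = ((exti (α s)) ⊗ₜ[ℂ] (1 : Pc r)) * (ω - wAct s ω))
    -- `Bact g` is the action of `g` on `B` induced by the action on the Weil algebra,
    (Bact : (Vc r ≃ₗ[ℂ] Vc r) → Bc ψ →ₐ[ℂ] Bc ψ)
    (hBact : ∀ g : Vc r ≃ₗ[ℂ] Vc r, ∀ ω : Wc r, Bact g (πB ψ ω) = πB ψ (wAct g ω))
    -- `c : T → ℂ` is a function constant on conjugacy classes,
    (c : (Vc r ≃ₗ[ℂ] Vc r) → ℂ)
    (hc : ∀ s ∈ T, ∀ w ∈ W, c (w * s * w⁻¹) = c s)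
    -- `DcB` is the operator on `B` induced by the Dunkl differential `D_c = ∑_{s∈T} c(s)·∇ₛ`,
    (DcB : Bc ψ →ₗ[ℂ] Bc ψ)
    (hDcB : ∀ ω : Wc r, DcB (πB ψ ω) = πB ψ (∑ s ∈ T, c s • nab s ω))
    -- `T` is the disjoint union of the two conjugacy classes `T_ℓ` and `T_p`
    -- with representatives `s_ℓ ∈ T_ℓ` and `s_p ∈ T_p`,
    (Tl Tp : Finset (Vc r ≃ₗ[ℂ] Vc r))
    (hTsplit : ∀ s, s ∈ T ↔ s ∈ Tl ∨ s ∈ Tp) (hTdisj : Disjoint Tl Tp)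
    (hTlconj : ∀ s ∈ Tl, ∀ w ∈ W, w * s * w⁻¹ ∈ Tl)
    (hTpconj : ∀ s ∈ Tp, ∀ w ∈ W, w * s * w⁻¹ ∈ Tp)
    (hTlclass : ∀ s ∈ Tl, ∀ s' ∈ Tl, ∃ w ∈ W, w * s * w⁻¹ = s')
    (hTpclass : ∀ s ∈ Tp, ∀ s' ∈ Tp, ∃ w ∈ W, w * s * w⁻¹ = s')
    (sl sp : Vc r ≃ₗ[ℂ] Vc r) (hsl : sl ∈ Tl) (hsp : sp ∈ Tp)
    -- `δW` is the Koszul differential on the Weil algebra, the odd derivation with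
    -- `δ(v ⊗ 1) = 1 ⊗ v` and `δ(1 ⊗ f) = 0`; `δB` is the induced operator on `B`,
    (δW : Wc r →ₗ[ℂ] Wc r)
    (hδ0 : ∀ k : Pc r, δW ((1 : Ec r) ⊗ₜ[ℂ] k) = 0)
    (hδ1 : ∀ (v : Vc r) (ω : Wc r),
      δW ((exti v ⊗ₜ[ℂ] (1 : Pc r)) * ω)
        = ((1 : Ec r) ⊗ₜ[ℂ] linP v) * ω - (exti v ⊗ₜ[ℂ] (1 : Pc r)) * δW ω)
    (δB : Bc ψ →ₗ[ℂ] Bc ψ)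
    (hδB : ∀ ω : Wc r, δB (πB ψ ω) = πB ψ (δW ω))
    -- `U` is an irreducible `W`-module (`σ` a representation of `W` on `U`):
    (U : Type) [AddCommGroup U] [Module ℂ U] [FiniteDimensional ℂ U] [Nontrivial U]
    (σ : (Vc r ≃ₗ[ℂ] Vc r) → U ≃ₗ[ℂ] U)
    (hσ : ∀ g ∈ W, ∀ g' ∈ W, σ (g * g') = σ g * σ g')
    (hUirr : ∀ p : Submodule ℂ U, (∀ g ∈ W, ∀ u ∈ p, σ g u ∈ p) → p = ⊥ ∨ p = ⊤) :
    -- the version for `x ∈ A ⊆ 𝒲`: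
    (∀ (x : Pc r) (j : U →ₗ[ℂ] Pc r), Function.Injective j →
      (∀ g ∈ W, ∀ u, j (σ g u) = pAct g (j u)) →
      x ∈ LinearMap.range j →
      Submodule.span ℂ {y | ∃ g ∈ W, y = pAct g x} = LinearMap.range j →
      δW (∑ s ∈ T, c s • nab s ((1 : Ec r) ⊗ₜ[ℂ] x))
        = (c sl * (Tl.card : ℂ)
              * (1 - LinearMap.trace ℂ U (σ sl : U →ₗ[ℂ] U) / (Module.finrank ℂ U : ℂ))
            + c sp * (Tp.card : ℂ)
              * (1 - LinearMap.trace ℂ U (σ sp : U →ₗ[ℂ] U) / (Module.finrank ℂ U : ℂ)))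
            • ((1 : Ec r) ⊗ₜ[ℂ] x))
    -- and the version for `x ∈ H ⊆ B`:
    ∧ (∀ (x : Bc ψ) (j : U →ₗ[ℂ] Bc ψ), Function.Injective j →
      (∀ g ∈ W, ∀ u, j (σ g u) = Bact g (j u)) →
      (∀ u, ∃ k : Pc r, j u = πB ψ ((1 : Ec r) ⊗ₜ[ℂ] k)) →
      x ∈ LinearMap.range j →
      Submodule.span ℂ {y | ∃ g ∈ W, y = Bact g x} = LinearMap.range j →
      δB (DcB x)
        = (c sl * (Tl.card : ℂ)
              * (1 - LinearMap.trace ℂ U (σ sl : U →ₗ[ℂ] U) / (Module.finrank ℂ U : ℂ))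
            + c sp * (Tp.card : ℂ)
              * (1 - LinearMap.trace ℂ U (σ sp : U →ₗ[ℂ] U) / (Module.finrank ℂ U : ℂ)))
            • x) := by
  have hTW : ∀ s ∈ T, s ∈ W := fun s hs => ((hT s).1 hs).1
  have hU := sum_smul_sub_of_two_conjClasses hσ hUirr hTW hTsplit hTdisj hTlconj hTpconj
    hTlclass hTpclass hc hsl hsp
  refine ⟨fun x j _ hj ⟨u, hu⟩ _ => ?_, fun x j _ hj hjA ⟨u, hu⟩ _ => ?_⟩
  · rw [koszul_dunkl_one_tmul hδ0 hδ1 hα hnab, ← hu,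
      sum_smul_sub_map_of_intertwines hU j (act := fun s => pAct s) fun s hs => hj s (hTW s hs),
      TensorProduct.tmul_smul]
  · obtain ⟨k, hk⟩ := hjA u
    rw [← hu, hk, hDcB, hδB, koszul_dunkl_one_tmul hδ0 hδ1 hα hnab,
      πB_one_tmul_sum_smul_sub hBact, ← hk,
      sum_smul_sub_map_of_intertwines hU j (act := fun s => Bact s) fun s hs => hj s (hTW s hs)]

/-- Proposition 2.4 of De Concini–Papi.
Let `U` be an irreducible `W`-module and let `x` be an element of `A` (or of `H`) lying in a
`W`-submodule isomorphic to `U` which it generates.  Then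
`δ(D_c(x)) = (c(s_ℓ)·|T_ℓ|·(1 − χ_U(s_ℓ)/χ_U(1)) + c(s_p)·|T_p|·(1 − χ_U(s_p)/χ_U(1)))·x`,
where `χ_U` is the character of `U`. -/
theorem statement7
    -- `W` is a finite irreducible reflection group on `V = ℂ^r` (complexified euclidean space),
    (W : Subgroup (Vc r ≃ₗ[ℂ] Vc r))
    (hWfin : Finite W)
    (hWorth : ∀ g ∈ W, ∀ x y, bil (g x) (g y) = bil x y)
    (hWirr : ∀ p : Submodule ℂ (Vc r), (∀ g ∈ W, ∀ v ∈ p, g v ∈ p) → p = ⊥ ∨ p = ⊤)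
    -- `T` is the set of reflections of `W`, generating `W`, with roots `α s`,
    (T : Finset (Vc r ≃ₗ[ℂ] Vc r))
    (hT : ∀ g, g ∈ T ↔ g ∈ W ∧ ∃ a, IsReflRoot g a)
    (hWgen : Subgroup.closure (T : Set _) = W)
    (α : (Vc r ≃ₗ[ℂ] Vc r) → Vc r)
    (hα : ∀ s ∈ T, IsReflRoot s (α s))
    -- `ψ₁, …, ψᵣ` are homogeneous generators of `A^W` of degrees `2 ≤ d₁ ≤ … ≤ d_r`,
    (ψ : Fin r → Pc r) (d : Fin r → ℕ)
    (hψhom : ∀ i, (ψ i).IsHomogeneous (d i))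
    (hd2 : ∀ i, 2 ≤ d i) (hdmono : Monotone d)
    (hψinv : ∀ i, ∀ g ∈ W, pAct g (ψ i) = ψ i)
    (hψgen : ∀ q : Pc r, (∀ g ∈ W, pAct g q = q) ↔ q ∈ Algebra.adjoin ℂ (Set.range ψ))
    (hψind : AlgebraicIndependent ℂ ψ)
    -- `nab s` is the operator `∇ₛ = (αₛ ⊗ 1)·(1−s)/αₛ` on the Weil algebra, characterized by
    -- `(1 ⊗ αₛ) · ∇ₛ(ω) = (αₛ ⊗ 1) · (ω − s·ω)` (multiplication by `1 ⊗ αₛ` is injective),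
    (nab : (Vc r ≃ₗ[ℂ] Vc r) → Wc r →ₗ[ℂ] Wc r)
    (hnab : ∀ s ∈ T, ∀ ω, ((1 : Ec r) ⊗ₜ[ℂ] linP (α s)) * nab s ω
        = ((exti (α s)) ⊗ₜ[ℂ] (1 : Pc r)) * (ω - wAct s ω))
    -- `Bact g` is the action of `g` on `B` induced by the action on the Weil algebra,
    (Bact : (Vc r ≃ₗ[ℂ] Vc r) → Bc ψ →ₐ[ℂ] Bc ψ)
    (hBact : ∀ g : Vc r ≃ₗ[ℂ] Vc r, ∀ ω : Wc r, Bact g (πB ψ ω) = πB ψ (wAct g ω))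
    -- `c : T → ℂ` is a function constant on conjugacy classes,
    (c : (Vc r ≃ₗ[ℂ] Vc r) → ℂ)
    (hc : ∀ s ∈ T, ∀ w ∈ W, c (w * s * w⁻¹) = c s)
    -- `DcB` is the operator on `B` induced by the Dunkl differential `D_c = ∑_{s∈T} c(s)·∇ₛ`,
    (DcB : Bc ψ →ₗ[ℂ] Bc ψ)
    (hDcB : ∀ ω : Wc r, DcB (πB ψ ω) = πB ψ (∑ s ∈ T, c s • nab s ω))
    -- `T` is the disjoint union of the two conjugacy classes `T_ℓ` and `T_p`
    -- with representatives `s_ℓ ∈ T_ℓ` and `s_p ∈ T_p`,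
    (Tl Tp : Finset (Vc r ≃ₗ[ℂ] Vc r))
    (hTsplit : ∀ s, s ∈ T ↔ s ∈ Tl ∨ s ∈ Tp) (hTdisj : Disjoint Tl Tp)
    (hTlconj : ∀ s ∈ Tl, ∀ w ∈ W, w * s * w⁻¹ ∈ Tl)
    (hTpconj : ∀ s ∈ Tp, ∀ w ∈ W, w * s * w⁻¹ ∈ Tp)
    (hTlclass : ∀ s ∈ Tl, ∀ s' ∈ Tl, ∃ w ∈ W, w * s * w⁻¹ = s')
    (hTpclass : ∀ s ∈ Tp, ∀ s' ∈ Tp, ∃ w ∈ W, w * s * w⁻¹ = s')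
    (sl sp : Vc r ≃ₗ[ℂ] Vc r) (hsl : sl ∈ Tl) (hsp : sp ∈ Tp)
    -- `δW` is the Koszul differential on the Weil algebra, the odd derivation with
    -- `δ(v ⊗ 1) = 1 ⊗ v` and `δ(1 ⊗ f) = 0`; `δB` is the induced operator on `B`,
    (δW : Wc r →ₗ[ℂ] Wc r)
    (hδ0 : ∀ k : Pc r, δW ((1 : Ec r) ⊗ₜ[ℂ] k) = 0)
    (hδ1 : ∀ (v : Vc r) (ω : Wc r),
      δW ((exti v ⊗ₜ[ℂ] (1 : Pc r)) * ω)
        = ((1 : Ec r) ⊗ₜ[ℂ] linP v) * ω - (exti v ⊗ₜ[ℂ] (1 : Pc r)) * δW ω)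
    (δB : Bc ψ →ₗ[ℂ] Bc ψ)
    (hδB : ∀ ω : Wc r, δB (πB ψ ω) = πB ψ (δW ω))
    -- `U` is an irreducible `W`-module (`σ` a representation of `W` on `U`):
    (U : Type) [AddCommGroup U] [Module ℂ U] [FiniteDimensional ℂ U] [Nontrivial U]
    (σ : (Vc r ≃ₗ[ℂ] Vc r) → U ≃ₗ[ℂ] U)
    (hσ : ∀ g ∈ W, ∀ g' ∈ W, σ (g * g') = σ g * σ g')
    (hUirr : ∀ p : Submodule ℂ U, (∀ g ∈ W, ∀ u ∈ p, σ g u ∈ p) → p = ⊥ ∨ p = ⊤) :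
    -- the version for `x ∈ A ⊆ 𝒲`:
    (∀ (x : Pc r) (j : U →ₗ[ℂ] Pc r), Function.Injective j →
      (∀ g ∈ W, ∀ u, j (σ g u) = pAct g (j u)) →
      x ∈ LinearMap.range j →
      Submodule.span ℂ {y | ∃ g ∈ W, y = pAct g x} = LinearMap.range j →
      δW (∑ s ∈ T, c s • nab s ((1 : Ec r) ⊗ₜ[ℂ] x))
        = (c sl * (Tl.card : ℂ)
              * (1 - LinearMap.trace ℂ U (σ sl : U →ₗ[ℂ] U) / (Module.finrank ℂ U : ℂ))
            + c sp * (Tp.card : ℂ)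
              * (1 - LinearMap.trace ℂ U (σ sp : U →ₗ[ℂ] U) / (Module.finrank ℂ U : ℂ)))
            • ((1 : Ec r) ⊗ₜ[ℂ] x))
    -- and the version for `x ∈ H ⊆ B`:
    ∧ (∀ (x : Bc ψ) (j : U →ₗ[ℂ] Bc ψ), Function.Injective j →
      (∀ g ∈ W, ∀ u, j (σ g u) = Bact g (j u)) →
      (∀ u, ∃ k : Pc r, j u = πB ψ ((1 : Ec r) ⊗ₜ[ℂ] k)) →
      x ∈ LinearMap.range j →
      Submodule.span ℂ {y | ∃ g ∈ W, y = Bact g x} = LinearMap.range j →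
      δB (DcB x)
        = (c sl * (Tl.card : ℂ)
              * (1 - LinearMap.trace ℂ U (σ sl : U →ₗ[ℂ] U) / (Module.finrank ℂ U : ℂ))
            + c sp * (Tp.card : ℂ)
              * (1 - LinearMap.trace ℂ U (σ sp : U →ₗ[ℂ] U) / (Module.finrank ℂ U : ℂ)))
            • x) :=
  statement7_general W T hT α hα ψ nab hnab Bact hBact c hc DcB hDcB Tl Tp hTsplit hTdisj hTlconj
    hTpconj hTlclass hTpclass sl sp hsl hsp δW hδ0 hδ1 δB hδB U σ hσ hUirr
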